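/- Let a₁,…,a_r and b₁,…,b_r (r ≥ 3) be points in ℝ² such that the lines ℓ_{a_i,b_i} in ℝ³ are all concurrent and all coplanar. Then the points a₁,…,a_r are collinear, the points b₁,…,b_r are collinear, and ‖a_i − a_j‖ = ‖b_i − b_j‖ for all i, j. -/

import Mathlib

/-- Counterclockwise rotation of `ℝ²` by `π/2`: `(x,y)^⊥ = (−y,x)`. -/
def perp (p : ℝ × ℝ) : ℝ × ℝ := (-p.2, p.1)

/-- The midpoint `u_{a,b} = ½(a+b)`. -/
noncomputable def uab (a b : ℝ × ℝ) : ℝ × ℝ := (1 / 2 : ℝ) • (a + b)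

/-- The direction `v_{a,b} = ½(a−b)^⊥`. -/
noncomputable def vab (a b : ℝ × ℝ) : ℝ × ℝ := (1 / 2 : ℝ) • perp (a - b)

/-- The Elekes–Sharir line `ℓ_{a,b} = {(u_{a,b} + t v_{a,b}, t) : t ∈ ℝ} ⊂ ℝ³`. -/
def lineES (a b : ℝ × ℝ) : Set ((ℝ × ℝ) × ℝ) :=
  {q | ∃ t : ℝ, q = (uab a b + t • vab a b, t)}

/-- The Euclidean distance between two points of `ℝ²`. -/
noncomputable def edist2 (p q : ℝ × ℝ) : ℝ :=
  Real.sqrt ((p.1 - q.1) ^ 2 + (p.2 - q.2) ^ 2)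

/-!
A common point `(x, t)` of the lines `ℓ_{aᵢ,bᵢ}` means `aᵢ + bᵢ + t (aᵢ - bᵢ)^⊥ = 2x` for all `i`.
Subtracting two of these equations and pairing with the difference of the differences shows
that `aᵢ ↦ bᵢ` preserves distances. A line `ℓ_{a,b}` lies in the plane `αX + βY + γT = δ` only if
its direction `(v_{a,b}, 1)` is parallel to the plane, a linear equation on `a - b`; eliminating
`b` with the concurrency equation (possible because `1 + t² ≠ 0`) turns it into one nontrivial
affine equation on `a`, so the `aᵢ` are collinear. Since `ℓ_{b,a}` is the mirror image of
`ℓ_{a,b}` under `t ↦ -t`, the same argument applies to the `bᵢ`.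
-/

lemma uab_comm (a b : ℝ × ℝ) : uab b a = uab a b := by
  simp only [uab, add_comm]

lemma vab_comm (a b : ℝ × ℝ) : vab b a = -vab a b := by
  ext <;> simp [vab, perp] <;> ring

lemma mem_lineES_iff {a b : ℝ × ℝ} {q : (ℝ × ℝ) × ℝ} :
    q ∈ lineES a b ↔ uab a b + q.2 • vab a b = q.1 := by
  constructor
  · rintro ⟨t, rfl⟩
    rfl
  · intro h
    exact ⟨q.2, by rw [h]⟩

lemma direction_mem_plane_of_lineES_subset {a b : ℝ × ℝ} {α β γ δ : ℝ}
    (h : ∀ q ∈ lineES a b, α * q.1.1 + β * q.1.2 + γ * q.2 = δ) :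
    α * (vab a b).1 + β * (vab a b).2 + γ = 0 := by
  have h₀ := h (uab a b + (0 : ℝ) • vab a b, 0) ⟨0, rfl⟩
  have h₁ := h (uab a b + (1 : ℝ) • vab a b, 1) ⟨1, rfl⟩
  simp only [zero_smul, add_zero, one_smul, Prod.fst_add, Prod.snd_add] at h₀ h₁
  linarith

/-- Subtracting the two equations gives `d + e + t (d - e)^⊥ = 0` for `d = a - a'`, `e = b - b'`;
pairing it with `d - e` kills the `⊥` term and leaves `‖d‖² - ‖e‖² = 0`. -/
lemma edist2_eq_of_concurrent {a b a' b' x : ℝ × ℝ} {t : ℝ}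
    (h : uab a b + t • vab a b = x) (h' : uab a' b' + t • vab a' b' = x) :
    edist2 a a' = edist2 b b' := by
  have h₁ := congrArg Prod.fst (h.trans h'.symm)
  have h₂ := congrArg Prod.snd (h.trans h'.symm)
  simp only [uab, vab, perp, Prod.fst_add, Prod.snd_add, Prod.smul_fst, Prod.smul_snd,
    Prod.fst_sub, Prod.snd_sub, smul_eq_mul] at h₁ h₂
  unfold edist2
  congr 1
  linear_combination 2 * (a.1 - a'.1 - b.1 + b'.1) * h₁ + 2 * (a.2 - a'.2 - b.2 + b'.2) * h₂

lemma collinear_of_forall_linear_eq {s : Set (ℝ × ℝ)} {c₁ c₂ K : ℝ} (hc : (c₁, c₂, K) ≠ 0)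
    (h : ∀ p ∈ s, c₁ * p.1 + c₂ * p.2 = K) : Collinear ℝ s := by
  by_cases hc₀ : c₁ = 0 ∧ c₂ = 0
  · obtain ⟨rfl, rfl⟩ := hc₀
    have hK : K ≠ 0 := fun hK => hc (by simp [hK])
    have hs : s = ∅ := Set.eq_empty_of_forall_notMem fun p hp => hK (by simpa using (h p hp).symm)
    rw [hs]
    exact collinear_empty ℝ _
  · have hN : c₁ ^ 2 + c₂ ^ 2 ≠ 0 := fun hN =>
      hc₀ ⟨by nlinarith [sq_nonneg c₁, sq_nonneg c₂], by nlinarith [sq_nonneg c₁, sq_nonneg c₂]⟩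
    rw [collinear_iff_exists_forall_eq_smul_vadd]
    refine ⟨(K * c₁ / (c₁ ^ 2 + c₂ ^ 2), K * c₂ / (c₁ ^ 2 + c₂ ^ 2)), (c₂, -c₁), fun p hp =>
      ⟨(c₂ * p.1 - c₁ * p.2) / (c₁ ^ 2 + c₂ ^ 2), ?_⟩⟩
    have hp' := h p hp
    ext <;> simp only [Prod.smul_fst, Prod.smul_snd, vadd_eq_add, Prod.fst_add, Prod.snd_add,
      smul_eq_mul] <;> field_simp
    · linear_combination c₁ * hp'
    · linear_combination c₂ * hp'

lemma linear_eq_of_concurrent_coplanar {a b x : ℝ × ℝ} {t α β γ : ℝ}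
    (hx : uab a b + t • vab a b = x) (hd : α * (vab a b).1 + β * (vab a b).2 + γ = 0) :
    (β - α * t) * a.1 + (-α - β * t) * a.2 =
      (β - α * t) * x.1 + (-α - β * t) * x.2 - γ * (1 + t ^ 2) := by
  have h₁ := congrArg Prod.fst hx
  have h₂ := congrArg Prod.snd hx
  simp only [uab, vab, perp, Prod.fst_add, Prod.snd_add, Prod.smul_fst, Prod.smul_snd,
    Prod.fst_sub, Prod.snd_sub, smul_eq_mul] at h₁ h₂ hd
  linear_combination (β - α * t) * h₁ + (-α - β * t) * h₂ + (1 + t ^ 2) * hd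

lemma collinear_range_of_concurrent_coplanar {ι : Type*} {a b : ι → ℝ × ℝ} {x : ℝ × ℝ}
    {t α β γ : ℝ} (hx : ∀ i, uab (a i) (b i) + t • vab (a i) (b i) = x)
    (hd : ∀ i, α * (vab (a i) (b i)).1 + β * (vab (a i) (b i)).2 + γ = 0)
    (hne : (α, β, γ) ≠ 0) : Collinear ℝ (Set.range a) := by
  refine collinear_of_forall_linear_eq ?_
    (Set.forall_mem_range.2 fun i => linear_eq_of_concurrent_coplanar (hx i) (hd i))
  contrapose! hne
  simp only [Prod.mk_eq_zero] at hne ⊢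
  obtain ⟨h₁, h₂, h₃⟩ := hne
  have ht : 0 < 1 + t ^ 2 := by positivity
  have hα : α = 0 := by
    have : α * (1 + t ^ 2) = 0 := by linear_combination -h₂ - t * h₁
    exact (mul_eq_zero.1 this).resolve_right ht.ne'
  have hβ : β = 0 := by linear_combination h₁ + t * hα
  subst hα hβ
  exact ⟨rfl, rfl, (mul_eq_zero.1 (by linear_combination -h₃)).resolve_right ht.ne'⟩

theorem stmt18_general (r : ℕ) (a b : Fin r → ℝ × ℝ)
    (hcon : ∃ q, ∀ i, q ∈ lineES (a i) (b i))
    (hcop : ∃ α β γ δ : ℝ, (α, β, γ) ≠ ((0 : ℝ), (0 : ℝ), (0 : ℝ)) ∧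
      ∀ i, ∀ q ∈ lineES (a i) (b i), α * q.1.1 + β * q.1.2 + γ * q.2 = δ) :
    Collinear ℝ (Set.range a) ∧ Collinear ℝ (Set.range b) ∧
      ∀ i j, edist2 (a i) (a j) = edist2 (b i) (b j) := by
  obtain ⟨⟨x, t⟩, hq⟩ := hcon
  obtain ⟨α, β, γ, δ, hne, hplane⟩ := hcop
  have hx i : uab (a i) (b i) + t • vab (a i) (b i) = x := mem_lineES_iff.1 (hq i)
  have hd i := direction_mem_plane_of_lineES_subset (hplane i)
  have hx' i : uab (b i) (a i) + (-t) • vab (b i) (a i) = x := by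
    rw [uab_comm, vab_comm, neg_smul_neg, hx i]
  have hd' i : α * (vab (b i) (a i)).1 + β * (vab (b i) (a i)).2 + -γ = 0 := by
    rw [vab_comm, Prod.fst_neg, Prod.snd_neg]
    linear_combination -hd i
  refine ⟨collinear_range_of_concurrent_coplanar hx hd hne,
    collinear_range_of_concurrent_coplanar hx' hd' ?_,
    fun i j => edist2_eq_of_concurrent (hx i) (hx j)⟩
  simpa [Prod.mk_eq_zero] using hne

/-- If the lines `ℓ_{aᵢ,bᵢ}` (for `r ≥ 3` pairs of points of `ℝ²`) are all
concurrent and all coplanar (lie in a single affine plane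
`{q : α q.1.1 + β q.1.2 + γ q.2 = δ}` of `ℝ³`), then the points `a₁,…,aᵣ`
are collinear, the points `b₁,…,bᵣ` are collinear, and
`‖aᵢ − aⱼ‖ = ‖bᵢ − bⱼ‖` for all `i, j`. -/
theorem stmt18 (r : ℕ) (hr : 3 ≤ r) (a b : Fin r → ℝ × ℝ)
    (hcon : ∃ q, ∀ i, q ∈ lineES (a i) (b i))
    (hcop : ∃ α β γ δ : ℝ, (α, β, γ) ≠ ((0 : ℝ), (0 : ℝ), (0 : ℝ)) ∧
      ∀ i, ∀ q ∈ lineES (a i) (b i), α * q.1.1 + β * q.1.2 + γ * q.2 = δ) :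
    Collinear ℝ (Set.range a) ∧ Collinear ℝ (Set.range b) ∧
      ∀ i j, edist2 (a i) (a j) = edist2 (b i) (b j) :=
  stmt18_general r a b hcon hcop
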